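/- arXiv:1302.5656 — 4 statements merged into one kernel-verified Lean document; each statement's English description precedes it below -/
import Mathlib

section
/- A countable family F = {F_n : n ∈ ℕ} of subsets of a compact metric space (X, d) is vanishing (i.e., for each open cover U of X, the subfamily of members of F not contained in any element of U is locally finite) if and only if lim_{n→∞} diam(F_n) = 0. -/
open Metric Set Filter Topology

/-
If `diam (F n) → 0`, a Lebesgue number `δ` of the cover makes all but finitely many `F n` lie
in a member of it, so the exceptional subfamily is finite. Conversely, covering `X` by balls of
radius `ε / 3`, the members of `F` inside no such ball form a locally finite family, which in a
compact space has only finitely many nonempty members; all other `F n` have diameter `< ε`.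
-/

section

variable {ι X : Type*}

def IsVanishing [TopologicalSpace X] (F : ι → Set X) : Prop :=
  ∀ U : Set (Set X), (∀ u ∈ U, IsOpen u) → ⋃₀ U = univ →
    ∀ x : X, ∃ V ∈ 𝓝 x, {i | (∀ u ∈ U, ¬ F i ⊆ u) ∧ (F i ∩ V).Nonempty}.Finite

theorem IsVanishing.locallyFinite [TopologicalSpace X] {F : ι → Set X} (hF : IsVanishing F)
    {U : Set (Set X)} (hUo : ∀ u ∈ U, IsOpen u) (hU : ⋃₀ U = univ) :
    LocallyFinite fun i : {i // ∀ u ∈ U, ¬ F i ⊆ u} => F i := fun x =>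
  let ⟨V, hV, hfin⟩ := hF U hUo hU x
  ⟨V, hV, (hfin.preimage Subtype.val_injective.injOn).subset fun i hi => ⟨i.2, hi⟩⟩

variable [PseudoMetricSpace X] [CompactSpace X] {F : ι → Set X}

theorem IsVanishing.tendsto_diam (hF : IsVanishing F) :
    Tendsto (fun i => diam (F i)) cofinite (𝓝 0) := by
  refine tendsto_order.2 ⟨fun a ha => .of_forall fun i => ha.trans_le diam_nonneg,
    fun ε hε => eventually_cofinite.2 ?_⟩
  set U := range fun x : X => ball x (ε / 3)
  have hUo : ∀ u ∈ U, IsOpen u := by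
    rintro _ ⟨x, rfl⟩
    exact isOpen_ball
  have hU : ⋃₀ U = univ :=
    eq_univ_of_forall fun x => ⟨ball x (ε / 3), ⟨x, rfl⟩, mem_ball_self (by positivity)⟩
  refine ((hF.locallyFinite hUo hU).finite_nonempty_of_compact.image Subtype.val).subset ?_
  intro i hi
  replace hi : ε ≤ diam (F i) := not_lt.1 hi
  have hne : (F i).Nonempty := nonempty_iff_ne_empty.2 fun he => by
    rw [he, diam_empty] at hi
    exact hε.not_ge hi
  have hbad : ∀ u ∈ U, ¬ F i ⊆ u := by
    rintro _ ⟨x, rfl⟩ hsub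
    have := (diam_mono hsub isBounded_ball).trans (diam_ball (x := x) (by positivity))
    linarith
  exact ⟨⟨i, hbad⟩, hne, rfl⟩

theorem isVanishing_of_tendsto_diam (hF : Tendsto (fun i => diam (F i)) cofinite (𝓝 0)) :
    IsVanishing F := by
  intro U hUo hU x
  obtain ⟨δ, hδ, hleb⟩ := lebesgue_number_lemma_of_metric_sUnion isCompact_univ hUo hU.ge
  refine ⟨univ, univ_mem, (eventually_cofinite.1 (hF.eventually (gt_mem_nhds hδ))).subset ?_⟩
  rintro i ⟨hbad, y, hy, -⟩ hlt
  obtain ⟨u, hu, hball⟩ := hleb y trivial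
  exact hbad u hu fun z hz =>
    hball ((dist_le_diam_of_mem (Bornology.IsBounded.all _) hz hy).trans_lt hlt)

theorem isVanishing_iff_tendsto_diam :
    IsVanishing F ↔ Tendsto (fun i => diam (F i)) cofinite (𝓝 0) :=
  ⟨IsVanishing.tendsto_diam, isVanishing_of_tendsto_diam⟩

end

/-- A countable family `F` of subsets of a compact metric space is vanishing
(for each open cover `U`, the subfamily of members not contained in any element
of `U` is locally finite) iff `diam (F n) → 0`. -/
theorem stmt0 {X : Type*} [MetricSpace X] [CompactSpace X] (F : ℕ → Set X) :
    (∀ U : Set (Set X), (∀ u ∈ U, IsOpen u) → ⋃₀ U = Set.univ →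
      ∀ x : X, ∃ V ∈ nhds x,
        {n : ℕ | (∀ u ∈ U, ¬ F n ⊆ u) ∧ (F n ∩ V).Nonempty}.Finite) ↔
    Filter.Tendsto (fun n => Metric.diam (F n)) Filter.atTop (nhds 0) := by
  rw [← Nat.cofinite_eq_atTop]
  exact isVanishing_iff_tendsto_diam
end

section
/- For every upper semicontinuous decomposition D of a metrizable space X, the decomposition space X/D is metrizable. -/
/-!
The quotient map `q : X → X/D` of an upper semicontinuous decomposition into compacta is a
perfect map, and perfect images of metrizable spaces are metrizable (Hanai–Morita–Stone).

For the latter, fix a scale `r` and a locally finite cover of `X` by sets `V c ⊆ ball c r`. The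
points `y` whose fiber meets exactly the `V c` with `c ∈ S` form a locally finite family in `Y`
indexed by `S`, because `q` is perfect. It expands to a locally finite open family, and `Y` is
perfectly normal, so these open sets are the supports of a locally finite, hence equicontinuous,
family of continuous functions. If `y'` lies in the support of the function attached to the `S`
of `y`, the fiber of `y'` lies within `2r` of the fiber of `y`. With `r = 1/(n+1)`, these families
embed `Y` in a countable product of spaces of functions with the topology of uniform convergence.
-/

open Set Function Filter Topology TopologicalSpace Metric Uniformity

instance UniformFun.isCountablyGenerated_uniformity (ι : Type*) :
    IsCountablyGenerated (𝓤 (UniformFun ι ℝ)) :=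
  (UniformFun.hasBasis_uniformity_of_basis ι ℝ
    Metric.uniformity_basis_dist_inv_nat_succ).isCountablyGenerated

theorem Equicontinuous.of_locallyFinite_support {ι Y α : Type*} [TopologicalSpace Y]
    [UniformSpace α] [Zero α] {F : ι → Y → α} (hF : ∀ i, Continuous (F i))
    (hlf : LocallyFinite fun i => support (F i)) : Equicontinuous F := by
  intro y U hU
  obtain ⟨P, hP, hfin⟩ := hlf y
  have hnear :
      ∀ᶠ y' in 𝓝 y, ∀ i ∈ {i | (support (F i) ∩ P).Nonempty}, (F i y, F i y') ∈ U :=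
    hfin.eventually_all.2 fun i _ => (hF i).continuousAt.eventually (mem_nhds_left _ hU)
  filter_upwards [hnear, hP] with y' hy' hy'P
  intro i
  by_cases hi : (support (F i) ∩ P).Nonempty
  · exact hy' i hi
  · have hzero : ∀ z ∈ P, F i z = 0 := fun z hz => by
      by_contra hne
      exact hi ⟨z, hne, hz⟩
    rw [hzero y (mem_of_mem_nhds hP), hzero y' hy'P]
    exact refl_mem_uniformity hU

theorem PseudoMetrizableSpace.of_equicontinuous {Y ι : Type*} [TopologicalSpace Y]
    (h : ℕ → ι → Y → ℝ) (hcont : ∀ n, Equicontinuous (h n))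
    (hsep : ∀ y, ∀ O ∈ 𝓝 y, ∃ n i, y ∈ support (h n i) ∧ support (h n i) ⊆ O) :
    PseudoMetrizableSpace Y := by
  -- uniform rather than pointwise convergence on `ι`, which may be uncountable
  let Φ : Y → ℕ → UniformFun ι ℝ := fun y n => UniformFun.ofFun fun i => h n i y
  have hΦ : Continuous Φ :=
    continuous_pi fun n => equicontinuous_iff_continuous.1 (hcont n)
  refine IsInducing.pseudoMetrizableSpace (f := Φ) (isInducing_iff_nhds.2 fun y => ?_)
  refine le_antisymm (hΦ.tendsto y).le_comap fun O hO => ?_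
  obtain ⟨n, i, hy, hO⟩ := hsep y O hO
  have hcoord : Continuous fun z : ℕ → UniformFun ι ℝ => UniformFun.toFun (z n) i :=
    (UniformFun.uniformContinuous_eval ℝ i).continuous.comp (continuous_apply n)
  exact ⟨_, (isOpen_ne_fun hcoord continuous_const).mem_nhds hy, fun y' hy' => hO hy'⟩

section
variable {X Y : Type*} [TopologicalSpace X] [TopologicalSpace Y] {q : X → Y}

theorem LocallyFinite.exists_isOpen_superset_finite {ι : Type*} {f : ι → Set X}
    (hf : LocallyFinite f) {K : Set X} (hK : IsCompact K) :
    ∃ W, IsOpen W ∧ K ⊆ W ∧ {i | (f i ∩ W).Nonempty}.Finite := by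
  refine hK.induction_on
    (p := fun s => ∃ W, IsOpen W ∧ s ⊆ W ∧ {i | (f i ∩ W).Nonempty}.Finite)
    ⟨∅, isOpen_empty, Subset.rfl, by simp⟩ ?_ ?_ fun x _ => ?_
  · rintro s t hst ⟨W, hW, htW, hfin⟩
    exact ⟨W, hW, hst.trans htW, hfin⟩
  · rintro s t ⟨W, hW, hsW, hWf⟩ ⟨W', hW', htW', hW'f⟩
    refine ⟨W ∪ W', hW.union hW', union_subset_union hsW htW', (hWf.union hW'f).subset ?_⟩
    intro i (hi : (f i ∩ (W ∪ W')).Nonempty)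
    rwa [inter_union_distrib_left, union_nonempty] at hi
  · obtain ⟨N, hN, hfin⟩ := hf x
    obtain ⟨W, hWN, hW, hxW⟩ := mem_nhds_iff.1 hN
    exact ⟨W, mem_nhdsWithin_of_mem_nhds (hW.mem_nhds hxW), W, hW, Subset.rfl,
      hfin.subset fun i hi => hi.mono (inter_subset_inter_right _ hWN)⟩

theorem IsProperMap.locallyFinite_image {ι : Type*} {f : ι → Set X} (hq : IsProperMap q)
    (hf : LocallyFinite f) : LocallyFinite fun i => q '' f i := by
  intro y
  obtain ⟨W, hW, hyW, hfin⟩ :=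
    hf.exists_isOpen_superset_finite (hq.isCompact_preimage (isCompact_singleton (x := y)))
  refine ⟨kernImage q W, (isClosedMap_iff_kernImage.1 hq.isClosedMap hW).mem_nhds
    fun x hx => hyW hx, hfin.subset ?_⟩
  rintro i ⟨_, ⟨x, hx, rfl⟩, hxW⟩
  exact ⟨x, hx, hxW rfl⟩

theorem LocallyFinite.exists_isOpen_superset_locallyFinite [ParacompactSpace X] {ι : Type*}
    {A : ι → Set X} (hA : LocallyFinite A) :
    ∃ M : ι → Set X, (∀ i, IsOpen (M i)) ∧ (∀ i, A i ⊆ M i) ∧ LocallyFinite M := by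
  have hN : ∀ x, ∃ N, IsOpen N ∧ x ∈ N ∧ {i | (A i ∩ N).Nonempty}.Finite := fun x => by
    obtain ⟨N, hN, hxN, hfin⟩ := hA.exists_isOpen_superset_finite isCompact_singleton
    exact ⟨N, hN, hxN rfl, hfin⟩
  choose N hNo hxN hNf using hN
  obtain ⟨W, hWo, hWcov, hWlf, hWN⟩ :=
    precise_refinement N hNo (iUnion_eq_univ_iff.2 fun x => ⟨x, hxN x⟩)
  refine ⟨fun i => ⋃ (x) (_ : (W x ∩ A i).Nonempty), W x,
    fun i => isOpen_biUnion fun x _ => hWo x, fun i a ha => ?_, fun x₀ => ?_⟩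
  · obtain ⟨x, hx⟩ := iUnion_eq_univ_iff.1 hWcov a
    exact mem_biUnion (x := x) ⟨a, hx, ha⟩ hx
  · obtain ⟨P, hP, hPf⟩ := hWlf x₀
    refine ⟨P, hP, (hPf.biUnion fun x _ => hNf x).subset ?_⟩
    rintro i ⟨z, hzM, hzP⟩
    obtain ⟨x, ⟨w, hwW, hwA⟩, hzW⟩ := mem_iUnion₂.1 hzM
    exact mem_biUnion ⟨z, hzW, hzP⟩ ⟨w, hwA, hWN x hwW⟩

theorem IsProperMap.exists_locallyFinite_isOpen_expansion [ParacompactSpace X] {ι : Type*}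
    (hq : IsProperMap q) (hqs : Surjective q) {K O : ι → Set Y} (hK : LocallyFinite K)
    (hKO : ∀ i, K i ⊆ O i) (hO : ∀ i, IsOpen (O i)) :
    ∃ L : ι → Set Y, (∀ i, IsOpen (L i)) ∧ (∀ i, K i ⊆ L i) ∧ (∀ i, L i ⊆ O i) ∧
      LocallyFinite L := by
  obtain ⟨M, hMo, hKM, hMlf⟩ :=
    (hK.preimage_continuous hq.continuous).exists_isOpen_superset_locallyFinite
  refine ⟨fun i => kernImage q (M i) ∩ O i,
    fun i => (isClosedMap_iff_kernImage.1 hq.isClosedMap (hMo i)).inter (hO i),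
    fun i y hy => ⟨fun x hx => hKM i (show q x ∈ K i from hx ▸ hy), hKO i hy⟩,
    fun i => inter_subset_right,
    (hq.locallyFinite_image hMlf).subset fun i y hy => ?_⟩
  obtain ⟨x, rfl⟩ := hqs y
  exact ⟨x, hy.1 rfl, rfl⟩

theorem IsClosedMap.normalSpace [NormalSpace X] (hqm : IsClosedMap q) (hqc : Continuous q)
    (hqs : Surjective q) : NormalSpace Y where
  normal s t hs ht hst := by
    obtain ⟨U, V, hU, hV, hsU, htV, hUV⟩ :=
      normal_separation (hs.preimage hqc) (ht.preimage hqc) (hst.preimage q)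
    refine ⟨kernImage q U, kernImage q V, isClosedMap_iff_kernImage.1 hqm hU,
      isClosedMap_iff_kernImage.1 hqm hV, subset_kernImage_iff.2 hsU,
      subset_kernImage_iff.2 htV, disjoint_left.2 fun y hyU hyV => ?_⟩
    obtain ⟨x, rfl⟩ := hqs y
    exact disjoint_left.1 hUV (hyU rfl) (hyV rfl)

theorem IsClosedMap.perfectlyNormalSpace [PerfectlyNormalSpace X] (hqm : IsClosedMap q)
    (hqc : Continuous q) (hqs : Surjective q) : PerfectlyNormalSpace Y where
  toNormalSpace := hqm.normalSpace hqc hqs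
  closed_gdelta C hC := by
    obtain ⟨U, hUo, hU⟩ := isGδ_iff_eq_iInter_nat.1 (hC.preimage hqc).isGδ
    have hC : C = ⋂ n, kernImage q (U n) := by
      refine (subset_iInter fun n => subset_kernImage_iff.2 (hU.le.trans (iInter_subset U n)))
        |>.antisymm fun y hy => ?_
      obtain ⟨x, rfl⟩ := hqs y
      show x ∈ q ⁻¹' C
      exact hU ▸ mem_iInter.2 fun n => mem_iInter.1 hy n rfl
    rw [hC]
    exact IsGδ.iInter_of_isOpen fun n => isClosedMap_iff_kernImage.1 hqm (hUo n)

theorem IsOpen.exists_continuous_support_eq [PerfectlyNormalSpace Y] {O : Set Y}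
    (hO : IsOpen O) : ∃ f : Y → ℝ, Continuous f ∧ support f = O := by
  obtain ⟨f, hf, -⟩ :=
    perfectlyNormalSpace_iff_forall_isClosed_preimage_zero.1 ‹_› Oᶜ hO.isClosed_compl
  refine ⟨f, f.continuous, ?_⟩
  rw [← compl_compl O, hf]
  ext y
  simp
end

section
variable {X Y ι : Type*} {q : X → Y}

def setOfFiberMeets (q : X → Y) (V : ι → Set X) (S : Set ι) : Set Y :=
  {y | ∀ c, c ∈ S ↔ (V c ∩ q ⁻¹' {y}).Nonempty}

theorem setOfFiberMeets_subset_kernImage {V : ι → Set X} (hV : ⋃ c, V c = univ) (S : Set ι) :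
    setOfFiberMeets q V S ⊆ kernImage q (⋃ c ∈ S, V c) := by
  intro y hy x hx
  obtain ⟨c, hc⟩ := iUnion_eq_univ_iff.1 hV x
  exact mem_biUnion ((hy c).2 ⟨x, hc, hx⟩) hc

variable [TopologicalSpace Y]

theorem IsProperMap.locallyFinite_setOfFiberMeets [TopologicalSpace X] (hq : IsProperMap q)
    {V : ι → Set X} (hV : LocallyFinite V) : LocallyFinite (setOfFiberMeets q V) := by
  intro y
  obtain ⟨N, hN, hfin⟩ := hq.locallyFinite_image hV y
  refine ⟨N, hN, hfin.finite_subsets.subset ?_⟩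
  rintro S ⟨y', hy', hy'N⟩ c hc
  obtain ⟨x, hxV, hx⟩ := (hy' c).1 hc
  exact ⟨y', ⟨x, hxV, hx⟩, hy'N⟩

theorem biUnion_subset_thickening_of_subset_ball [PseudoMetricSpace X] {V : X → Set X} {r : ℝ}
    (hV : ∀ c, V c ⊆ ball c r) {S F : Set X} (hS : ∀ c ∈ S, (V c ∩ F).Nonempty) :
    ⋃ c ∈ S, V c ⊆ thickening (2 * r) F := by
  intro z hz
  obtain ⟨c, hc, hzc⟩ := mem_iUnion₂.1 hz
  obtain ⟨a, haV, haF⟩ := hS c hc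
  refine mem_thickening_iff.2 ⟨a, haF, ?_⟩
  calc dist z a ≤ dist z c + dist a c := dist_triangle_right z a c
    _ < r + r := add_lt_add (hV c hzc) (hV c haV)
    _ = 2 * r := by ring

theorem IsProperMap.exists_equicontinuous_fibers_subset_thickening [PseudoMetricSpace X]
    (hq : IsProperMap q) (hqs : Surjective q) {r : ℝ} (hr : 0 < r) :
    ∃ h : Set X → Y → ℝ, Equicontinuous h ∧ ∀ y, ∃ S, y ∈ support (h S) ∧
      ∀ y' ∈ support (h S), q ⁻¹' {y'} ⊆ thickening (2 * r) (q ⁻¹' {y}) := by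
  obtain ⟨V, hVo, hVcov, hVlf, hVball⟩ := precise_refinement (fun c : X => ball c r)
    (fun c => isOpen_ball) (iUnion_eq_univ_iff.2 fun x => ⟨x, mem_ball_self hr⟩)
  obtain ⟨L, hLo, hKL, hLsub, hLlf⟩ := hq.exists_locallyFinite_isOpen_expansion hqs
    (hq.locallyFinite_setOfFiberMeets hVlf) (setOfFiberMeets_subset_kernImage hVcov)
    fun S => isClosedMap_iff_kernImage.1 hq.isClosedMap (isOpen_biUnion fun c _ => hVo c)
  have := hq.isClosedMap.perfectlyNormalSpace hq.continuous hqs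
  choose h hhc hhL using fun S => (hLo S).exists_continuous_support_eq
  refine ⟨h, Equicontinuous.of_locallyFinite_support hhc (by simpa only [hhL] using hLlf),
    fun y => ⟨{c | (V c ∩ q ⁻¹' {y}).Nonempty}, ?_, fun y' hy' x hx => ?_⟩⟩
  · rw [hhL]
    exact hKL _ fun c => Iff.rfl
  · rw [hhL] at hy'
    exact biUnion_subset_thickening_of_subset_ball hVball (fun c hc => hc) (hLsub _ hy' hx)

theorem IsProperMap.pseudoMetrizableSpace [TopologicalSpace X] [PseudoMetrizableSpace X]
    (hq : IsProperMap q) (hqs : Surjective q) : PseudoMetrizableSpace Y := by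
  let := pseudoMetrizableSpacePseudoMetric X
  choose h hh hsupp using fun n : ℕ =>
    hq.exists_equicontinuous_fibers_subset_thickening hqs (Nat.one_div_pos_of_nat (n := n))
  refine PseudoMetrizableSpace.of_equicontinuous h hh fun y O hO => ?_
  obtain ⟨δ, hδ, hthick⟩ :=
    (hq.isCompact_preimage isCompact_singleton).exists_thickening_subset_open
      (isOpen_interior.preimage hq.continuous) fun x (hx : q x = y) =>
        show q x ∈ interior O from hx ▸ mem_interior_iff_mem_nhds.2 hO
  obtain ⟨n, hn⟩ := exists_nat_one_div_lt (half_pos hδ)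
  obtain ⟨S, hyS, hS⟩ := hsupp n y
  refine ⟨n, S, hyS, fun y' hy' => ?_⟩
  obtain ⟨x, rfl⟩ := hqs y'
  exact interior_subset (hthick (thickening_mono (by linarith) _ (hS _ hy' rfl)))
end

section
variable {X : Type*} {D : Set (Set X)} {q : X → D}

theorem apply_eq_of_mem_of_pairwise_disjoint (hdisj : D.Pairwise Disjoint)
    (hq : ∀ x, x ∈ (q x : Set X)) {x : X} {A : D} (hx : x ∈ (A : Set X)) : q x = A :=
  Subtype.ext <| by_contra fun hne => disjoint_left.1 (hdisj (q x).2 A.2 hne) (hq x) hx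

theorem preimage_singleton_eq_of_pairwise_disjoint (hdisj : D.Pairwise Disjoint)
    (hq : ∀ x, x ∈ (q x : Set X)) (A : D) : q ⁻¹' {A} = A :=
  ext fun x => ⟨fun (hx : q x = A) => hx ▸ hq x, apply_eq_of_mem_of_pairwise_disjoint hdisj hq⟩

theorem preimage_image_eq_sUnion_of_pairwise_disjoint (hdisj : D.Pairwise Disjoint)
    (hq : ∀ x, x ∈ (q x : Set X)) (F : Set X) :
    q ⁻¹' (q '' F) = ⋃₀ {A ∈ D | (A ∩ F).Nonempty} := by
  ext x
  constructor
  · rintro ⟨x', hx'F, hx'x⟩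
    exact ⟨q x, ⟨(q x).2, x', hx'x ▸ hq x', hx'F⟩, hq x⟩
  · rintro ⟨A, ⟨hA, x', hx'A, hx'F⟩, hxA⟩
    exact ⟨x', hx'F, (apply_eq_of_mem_of_pairwise_disjoint hdisj hq (A := ⟨A, hA⟩) hx'A).trans
      (apply_eq_of_mem_of_pairwise_disjoint hdisj hq hxA).symm⟩
end

theorem stmt4_general {X : Type*} [tX : TopologicalSpace X] [TopologicalSpace.MetrizableSpace X]
    (D : Set (Set X))
    (hdisj : D.Pairwise Disjoint)
    (hne : ∀ A ∈ D, A.Nonempty) (hcpt : ∀ A ∈ D, IsCompact A)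
    (husc : ∀ F : Set X, IsClosed F → IsClosed (⋃₀ {A ∈ D | (A ∩ F).Nonempty}))
    (q : X → D) (hq : ∀ x : X, x ∈ (q x : Set X)) :
    @TopologicalSpace.MetrizableSpace D (TopologicalSpace.coinduced q tX) := by
  let : TopologicalSpace D := TopologicalSpace.coinduced q tX
  have hfib := preimage_singleton_eq_of_pairwise_disjoint hdisj hq
  have hclosed : IsClosedMap q := fun F hF => by
    rw [← isOpen_compl_iff, isOpen_coinduced, preimage_compl,
      preimage_image_eq_sUnion_of_pairwise_disjoint hdisj hq, isOpen_compl_iff]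
    exact husc F hF
  have hproper : IsProperMap q := isProperMap_iff_isClosedMap_and_compact_fibers.2
    ⟨continuous_coinduced_rng, hclosed, fun A => by rw [hfib A]; exact hcpt A A.2⟩
  have hsurj : Surjective q := fun A =>
    (hne A A.2).imp fun _ => apply_eq_of_mem_of_pairwise_disjoint hdisj hq
  have : T1Space D :=
    ⟨fun A => isClosed_coinduced.2 (by rw [hfib A]; exact (hcpt A A.2).isClosed)⟩
  have := hproper.pseudoMetrizableSpace hsurj
  infer_instance

/-- For every upper semicontinuous decomposition `D` of a metrizable space `X`,
the decomposition space `X/D` (with the quotient topology) is metrizable. -/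
theorem stmt4 {X : Type*} [tX : TopologicalSpace X] [TopologicalSpace.MetrizableSpace X]
    (D : Set (Set X))
    (hcov : ⋃₀ D = Set.univ) (hdisj : D.Pairwise Disjoint)
    (hne : ∀ A ∈ D, A.Nonempty) (hcpt : ∀ A ∈ D, IsCompact A)
    (husc : ∀ F : Set X, IsClosed F → IsClosed (⋃₀ {A ∈ D | (A ∩ F).Nonempty}))
    (q : X → D) (hq : ∀ x : X, x ∈ (q x : Set X)) :
    @TopologicalSpace.MetrizableSpace D (TopologicalSpace.coinduced q tX) :=
  stmt4_general (tX := tX) D hdisj hne hcpt husc q hq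
end

section
/- Every connected, strongly locally homogeneous topological space X is topologically homogeneous: for any two points x, y ∈ X there exists a homeomorphism h : X → X with h(x) = y. -/
/-! With `O = X`, strong local homogeneity makes every orbit of the homeomorphism group open,
and in a connected space an equivalence relation with open classes has a single class. -/

open Topology

theorem Homeomorph.exists_apply_eq_of_preconnectedSpace {X : Type*} [TopologicalSpace X]
    [PreconnectedSpace X]
    (hloc : ∀ x : X, ∃ U ∈ 𝓝 x, ∀ a ∈ U, ∀ b ∈ U, ∃ h : X ≃ₜ X, h a = b) (x y : X) :
    ∃ h : X ≃ₜ X, h x = y := by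
  refine PreconnectedSpace.induction₂' (fun a b ↦ ∃ h : X ≃ₜ X, h a = b) (fun a ↦ ?_)
    ⟨fun a b c ⟨f, hf⟩ ⟨g, hg⟩ ↦ ⟨f.trans g, by simp [hf, hg]⟩⟩ x y
  obtain ⟨U, hU, hUhom⟩ := hloc a
  filter_upwards [hU] with b hb
  exact ⟨hUhom a (mem_of_mem_nhds hU) b hb, hUhom b hb a (mem_of_mem_nhds hU)⟩

/-- Every connected strongly locally homogeneous space is topologically
homogeneous. -/
theorem stmt8 {X : Type*} [TopologicalSpace X] [ConnectedSpace X]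
    (hslh : ∀ x : X, ∀ O ∈ nhds x, ∃ U ∈ nhds x, U ⊆ O ∧
      ∀ a ∈ U, ∀ b ∈ U, ∃ h : X ≃ₜ X, h a = b ∧ ∀ z ∉ O, h z = z) :
    ∀ x y : X, ∃ h : X ≃ₜ X, h x = y := by
  refine Homeomorph.exists_apply_eq_of_preconnectedSpace fun x ↦ ?_
  obtain ⟨U, hU, -, hUhom⟩ := hslh x Set.univ Filter.univ_mem
  exact ⟨U, hU, fun a ha b hb ↦ (hUhom a ha b hb).imp fun _ ↦ And.left⟩
end

section
/- Let a < b be points of the Cantor set M^1_0 ⊆ [0,1], let r_{[a,b]} : [0,1] → [a,b] be the retraction with r(x)=x on [a,b], r([0,a])={a}, r([b,1])={b}, and let r̄ : [0,1]^k → pr_k^{-1}([a,b]) be the induced map (x_1,…,x_k) ↦ (x_1,…,x_{k-1}, r(x_k)). Then r̄ maps the Menger cube M^k_n into itself, so its restriction is a retraction of M^k_n onto M^k_n ∩ pr_k^{-1}([a,b]). -/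
/-- `T^k_n`: points of `{0,1,2}^k` with at most `n` coordinates equal to `1`. -/
def Tcube (n k : ℕ) : Set (Fin k → Fin 3) :=
  {x | (Finset.univ.filter fun i => x i = 1).card ≤ n}

/-- The coordinatewise base-3 summation map. -/
noncomputable def sMap {k : ℕ} (x : ℕ → (Fin k → Fin 3)) : Fin k → ℝ :=
  fun j => ∑' i : ℕ, (x i j : ℝ) / 3 ^ (i + 1)

/-- The Menger cube `M^k_n ⊆ [0,1]^k`. -/
noncomputable def MengerCube (n k : ℕ) : Set (Fin k → ℝ) :=
  {p | ∃ x : ℕ → (Fin k → Fin 3), (∀ i, x i ∈ Tcube n k) ∧ p = sMap x}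

/-- The standard middle-thirds Cantor set `M^1_0`. -/
noncomputable def CantorSet : Set ℝ :=
  {a | ∃ x : ℕ → Fin 3, (∀ i, x i ≠ 1) ∧ a = ∑' i : ℕ, (x i : ℝ) / 3 ^ (i + 1)}

/-- The induced retraction `r̄`, replacing the last coordinate by its projection
onto `[a,b]`. -/
noncomputable def rbar (k : ℕ) (a b : ℝ) (p : Fin (k + 1) → ℝ) : Fin (k + 1) → ℝ :=
  Function.update p (Fin.last k) (max a (min b (p (Fin.last k))))

/-!
Each value of the retraction `max a (min b t)` is `a`, `b` or `t`, so `r̄ p` either is `p` or is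
`p` with its last coordinate replaced by a point of the Cantor set. The latter stays in the Menger
cube: in every digit vector, overwrite the last digit with the corresponding ternary digit of that
point, which is `0` or `2` and so does not raise the number of `1`s.
-/

lemma update_mem_mengerCube {n k : ℕ} {p : Fin k → ℝ} (hp : p ∈ MengerCube n k) (j : Fin k)
    {c : ℝ} (hc : c ∈ CantorSet) : Function.update p j c ∈ MengerCube n k := by
  obtain ⟨x, hx, rfl⟩ := hp
  obtain ⟨d, hd, rfl⟩ := hc
  refine ⟨fun i => Function.update (x i) j (d i),
    fun i => (Finset.card_le_card ?_).trans (hx i), ?_⟩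
  · intro l hl
    simp only [Finset.mem_filter, Finset.mem_univ, true_and] at hl ⊢
    rcases eq_or_ne l j with rfl | hlj
    · exact absurd (by simpa using hl) (hd i)
    · rwa [Function.update_of_ne hlj] at hl
  · funext l
    rcases eq_or_ne l j with rfl | hlj
    · simp [sMap]
    · simp [sMap, Function.update_of_ne hlj]

lemma max_min_eq_or {α : Type*} [LinearOrder α] (a b t : α) :
    max a (min b t) = a ∨ max a (min b t) = b ∨ max a (min b t) = t := by
  rcases min_choice b t with h | h <;> rcases max_choice a (min b t) with h' | h' <;> simp_all

section rbar

variable {k : ℕ} {a b : ℝ} {p : Fin (k + 1) → ℝ}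

lemma rbar_eq_self (h : p (Fin.last k) ∈ Set.Icc a b) : rbar k a b p = p := by
  rw [rbar, min_eq_right h.2, max_eq_right h.1, Function.update_eq_self]

lemma rbar_apply_last_mem_Icc (hab : a ≤ b) : rbar k a b p (Fin.last k) ∈ Set.Icc a b := by
  rw [rbar, Function.update_self]
  exact ⟨le_max_left _ _, max_le hab (min_le_left _ _)⟩

lemma rbar_mem_mengerCube {n : ℕ} (ha : a ∈ CantorSet) (hb : b ∈ CantorSet)
    (hp : p ∈ MengerCube n (k + 1)) : rbar k a b p ∈ MengerCube n (k + 1) := by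
  rcases max_min_eq_or a b (p (Fin.last k)) with h | h | h <;> rw [rbar, h]
  · exact update_mem_mengerCube hp _ ha
  · exact update_mem_mengerCube hp _ hb
  · rwa [Function.update_eq_self]

end rbar

theorem stmt11_general (n k : ℕ) (a b : ℝ)
    (ha : a ∈ CantorSet) (hb : b ∈ CantorSet) (hab : a < b) :
    (∀ p ∈ MengerCube n (k + 1),
        rbar k a b p ∈ MengerCube n (k + 1) ∧ rbar k a b p (Fin.last k) ∈ Set.Icc a b) ∧
      ∀ p ∈ MengerCube n (k + 1), p (Fin.last k) ∈ Set.Icc a b → rbar k a b p = p :=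
  ⟨fun _ hp => ⟨rbar_mem_mengerCube ha hb hp, rbar_apply_last_mem_Icc hab.le⟩,
    fun _ _ h => rbar_eq_self h⟩

/-- For points `a < b` of the Cantor set, `r̄` maps the Menger cube `M^{k+1}_n`
into itself, onto `M^{k+1}_n ∩ pr^{-1}([a,b])`, fixing that intersection:
its restriction is a retraction of `M^{k+1}_n` onto `M^{k+1}_n ∩ pr^{-1}([a,b])`. -/
theorem stmt11 (n k : ℕ) (hk : 2 * n + 2 ≤ k + 1) (a b : ℝ)
    (ha : a ∈ CantorSet) (hb : b ∈ CantorSet) (hab : a < b) :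
    (∀ p ∈ MengerCube n (k + 1),
        rbar k a b p ∈ MengerCube n (k + 1) ∧ rbar k a b p (Fin.last k) ∈ Set.Icc a b) ∧
      ∀ p ∈ MengerCube n (k + 1), p (Fin.last k) ∈ Set.Icc a b → rbar k a b p = p :=
  stmt11_general n k a b ha hb hab
end
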